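/- arXiv:2503.10512 — 2 statements merged into one kernel-verified Lean document; each statement's English description precedes it below -/
import Mathlib

section
/- Let S_1, ..., S_{n+1} be exchangeable and almost surely distinct real-valued random variables, and let k = ⌈(1-α)(n+1)⌉ ≤ n. Let S_{(k)} denote the k-th order statistic of S_1,...,S_n. Then, conditional on (S_1,...,S_n), the coverage probability P(S_{n+1} ≤ S_{(k)} | S_1,...,S_n) is distributed (over the draw of the calibration set) as a Beta(k, n+1-k) random variable. -/
open MeasureTheory
open scoped ENNReal

/-- The `k`-th smallest value among `v 0, ..., v (n-1)`, taken as `+∞` when `k > n`. -/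
noncomputable def conformalQuantile {n : ℕ} (v : Fin n → ℝ) (k : ℕ) : EReal :=
  sInf {t : EReal | k ≤ Nat.card {i : Fin n // (v i : EReal) ≤ t}}

/-- The Beta distribution with shape parameters `a` and `b`. -/
noncomputable def betaMeasure (a b : ℝ) : Measure ℝ :=
  (volume.restrict (Set.Ioo (0 : ℝ) 1)).withDensity fun x =>
    ENNReal.ofReal (Real.Gamma (a + b) / (Real.Gamma a * Real.Gamma b) *
      x ^ (a - 1) * (1 - x) ^ (b - 1))

/-!
Let `F` be the distribution function of `ν`; it is continuous since `ν` has no atoms. The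
coverage is `F(S₍ₖ₎)`, and because `F` is monotone, `F(S₍ₖ₎) ≤ t` holds exactly when at least
`k` of the `Sᵢ` fall into the lower set `{F ≤ t}`. By continuity of `F` that set has mass `t` for
`t ∈ [0, 1]`, so the event has the binomial tail probability `∑_{j ≥ k} (n choose j) tʲ (1-t)ⁿ⁻ʲ`.
Its derivative telescopes to the `Beta(k, n+1-k)` density, so it is the Beta distribution function.
-/

open Set

section OrderStatistic

variable {α ι : Type*} [CompleteLinearOrder α] [Finite ι]

noncomputable def orderStatistic (w : ι → α) (k : ℕ) : α :=
  sInf {t | k ≤ Nat.card {i // w i ≤ t}}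

theorem conformalQuantile_eq_orderStatistic {n : ℕ} (v : Fin n → ℝ) (k : ℕ) :
    conformalQuantile v k = orderStatistic (fun i => (v i : EReal)) k :=
  rfl

theorem Nat.card_subtype_mono {p q : ι → Prop} (h : ∀ i, p i → q i) :
    Nat.card {i // p i} ≤ Nat.card {i // q i} :=
  Nat.card_mono (Set.toFinite {i | q i}) h

theorem le_natCard_le_orderStatistic {w : ι → α} {k : ℕ} (hk : k ≤ Nat.card ι) :
    k ≤ Nat.card {i // w i ≤ orderStatistic w k} := by
  classical
  have := Fintype.ofFinite ι
  set q := orderStatistic w k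
  by_contra! hlt
  have hne : (Finset.univ.filter fun i => q < w i).Nonempty := by
    by_contra! hempty
    have hall : ∀ i, w i ≤ q := fun i => not_lt.1 fun hi =>
      Finset.filter_nonempty_iff.2 ⟨i, Finset.mem_univ i, hi⟩ |>.ne_empty hempty
    exact (hlt.trans_le hk).ne (Nat.card_congr (Equiv.subtypeUnivEquiv hall))
  -- finitely many values exceed `q`, so some `t` of the set defining `q` lies below all of them
  have hq : q < (Finset.univ.filter fun i => q < w i).inf' hne w :=
    (Finset.lt_inf'_iff hne).2 fun i hi => (Finset.mem_filter.1 hi).2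
  obtain ⟨t, ht, htq⟩ := sInf_lt_iff.1 hq
  refine hlt.not_ge (ht.trans (Nat.card_subtype_mono fun i hi => not_lt.1 fun hqi => ?_))
  exact (hi.trans_lt htq).not_ge (Finset.inf'_le _ (Finset.mem_filter.2 ⟨Finset.mem_univ i, hqi⟩))

theorem orderStatistic_le_iff {w : ι → α} {k : ℕ} (hk : k ≤ Nat.card ι) {t : α} :
    orderStatistic w k ≤ t ↔ k ≤ Nat.card {i // w i ≤ t} :=
  ⟨fun h => (le_natCard_le_orderStatistic hk).trans (Nat.card_subtype_mono fun _ hi => hi.trans h),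
    fun h => sInf_le h⟩

theorem orderStatistic_mem_iff {w : ι → α} {k : ℕ} (hk1 : 1 ≤ k) (hk : k ≤ Nat.card ι)
    {A : Set α} (hA : IsLowerSet A) :
    orderStatistic w k ∈ A ↔ k ≤ Nat.card {i // w i ∈ A} := by
  refine ⟨fun h => (le_natCard_le_orderStatistic hk).trans
    (Nat.card_subtype_mono fun _ hi => hA hi h), fun h => ?_⟩
  have : Nonempty {i // w i ∈ A} := Nat.card_pos_iff.1 (hk1.trans h) |>.1
  obtain ⟨⟨j, hj⟩, hmax⟩ := Finite.exists_max fun i : {i // w i ∈ A} => w i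
  refine hA ((orderStatistic_le_iff hk).2 (h.trans ?_)) hj
  exact Nat.card_subtype_mono fun i hi => hmax ⟨i, hi⟩

end OrderStatistic

namespace ProbabilityTheory

variable (ν : Measure ℝ) [IsProbabilityMeasure ν] [NullSingletonClass ν]

theorem continuous_cdf : Continuous (cdf ν) := by
  refine continuous_iff_continuousAt.2 fun x => ?_
  rw [(monotone_cdf ν).continuousAt_iff_leftLim_eq_rightLim, StieltjesFunction.rightLim_eq]
  have h := (cdf ν).measure_singleton x
  rw [measure_cdf, measure_singleton, eq_comm, ENNReal.ofReal_eq_zero, sub_nonpos] at h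
  exact le_antisymm ((monotone_cdf ν).leftLim_le le_rfl) h

theorem measureReal_setOf_cdf_le (t : ℝ) :
    ν.real {x | cdf ν x ≤ t} = max 0 (min t 1) := by
  set L := {x | cdf ν x ≤ t}
  rcases L.eq_empty_or_nonempty with hL | ⟨x₀, hx₀⟩
  · have ht : t ≤ 0 := not_lt.1 fun ht => by
      obtain ⟨x, hx⟩ := ((tendsto_cdf_atBot ν).eventually (gt_mem_nhds ht)).exists
      exact hL.subset (show x ∈ L from hx.le)
    rw [hL, measureReal_empty, max_eq_left (min_le_of_left_le ht)]
  have ht0 : 0 ≤ t := (cdf_nonneg ν x₀).trans hx₀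
  rcases lt_or_ge t 1 with ht1 | ht1
  swap
  · rw [show L = univ from eq_univ_of_forall fun x => (cdf_le_one ν x).trans ht1,
      probReal_univ, min_eq_right ht1, max_eq_right zero_le_one]
  obtain ⟨M, hM⟩ := ((tendsto_cdf_atTop ν).eventually (lt_mem_nhds ht1)).exists
  have hbdd : BddAbove L := ⟨M, fun x hx => not_lt.1 fun hMx =>
    (hM.trans_le ((monotone_cdf ν) hMx.le)).not_ge hx⟩
  have hclosed : IsClosed L := isClosed_le (continuous_cdf ν) continuous_const
  set q := sSup L
  have hq : cdf ν q ≤ t := hclosed.csSup_mem ⟨x₀, hx₀⟩ hbdd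
  have hLq : L = Iic q := ext fun x =>
    ⟨fun hx => le_csSup hbdd hx, fun hx => ((monotone_cdf ν) hx).trans hq⟩
  -- if `cdf ν q < t`, continuity would put points to the right of `q` into `L`
  have hq' : t ≤ cdf ν q := not_lt.1 fun hlt => by
    obtain ⟨x, hqx, hx⟩ := ((continuous_cdf ν).continuousAt.eventually (gt_mem_nhds hlt)).exists_gt
    exact hqx.not_ge (le_csSup hbdd hx.le)
  rw [hLq, ← cdf_eq_real, le_antisymm hq hq', min_eq_left ht1.le, max_eq_right ht0]

end ProbabilityTheory

noncomputable def binomTail (n k : ℕ) (p : ℝ) : ℝ :=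
  ∑ j ∈ Finset.Icc k n, (n.choose j : ℝ) * p ^ j * (1 - p) ^ (n - j)

section Binomial

open scoped Classical

variable {X ι : Type*} [Fintype ι] {s : Set X}

theorem preimage_filter_mem_eq_pi (B : Finset ι) :
    (fun v : ι → X => Finset.univ.filter (v · ∈ s)) ⁻¹' {B} =
      univ.pi fun i => if i ∈ B then s else sᶜ := by
  ext v
  simp only [mem_preimage, mem_singleton_iff, mem_univ_pi, Finset.ext_iff, Finset.mem_filter,
    Finset.mem_univ, true_and]
  refine forall_congr' fun i => ?_
  split_ifs with hi <;> simp [hi]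

theorem setOf_le_natCard_eq_biUnion (k : ℕ) :
    {v : ι → X | k ≤ Nat.card {i // v i ∈ s}} =
      ⋃ B ∈ (Finset.univ : Finset (Finset ι)).filter (fun B => k ≤ B.card),
        (fun v : ι → X => Finset.univ.filter (v · ∈ s)) ⁻¹' {B} := by
  ext v
  simp [Nat.card_eq_fintype_card, Fintype.card_subtype]

variable [MeasurableSpace X]

theorem measurableSet_preimage_filter_mem (hs : MeasurableSet s) (B : Finset ι) :
    MeasurableSet ((fun v : ι → X => Finset.univ.filter (v · ∈ s)) ⁻¹' {B}) := by
  rw [preimage_filter_mem_eq_pi]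
  refine MeasurableSet.univ_pi fun i => ?_
  split_ifs
  exacts [hs, hs.compl]

theorem measurableSet_setOf_le_natCard (hs : MeasurableSet s) (k : ℕ) :
    MeasurableSet {v : ι → X | k ≤ Nat.card {i // v i ∈ s}} := by
  rw [setOf_le_natCard_eq_biUnion]
  exact Finset.measurableSet_biUnion _ fun B _ => measurableSet_preimage_filter_mem hs B

variable (μ : Measure X) [IsProbabilityMeasure μ]

theorem measureReal_pi_univ_pi_ite_mem (hs : MeasurableSet s) (B : Finset ι) :
    (Measure.pi fun _ : ι => μ).real (univ.pi fun i => if i ∈ B then s else sᶜ) =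
      μ.real s ^ B.card * (1 - μ.real s) ^ (Fintype.card ι - B.card) := by
  rw [measureReal_def, Measure.pi_pi, ENNReal.toReal_prod]
  simp only [← measureReal_def, apply_ite, Finset.prod_ite, Finset.prod_const,
    probReal_compl_eq_one_sub hs, Finset.filter_mem_eq_inter, Finset.univ_inter,
    Finset.filter_not, Finset.card_sdiff, Finset.inter_univ, Finset.card_univ]

theorem measureReal_pi_setOf_le_natCard (hs : MeasurableSet s) (k : ℕ) :
    (Measure.pi fun _ : ι => μ).real {v | k ≤ Nat.card {i // v i ∈ s}} =
      binomTail (Fintype.card ι) k (μ.real s) := by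
  rw [setOf_le_natCard_eq_biUnion, measureReal_biUnion_finset
    ((pairwiseDisjoint_fiber _ _).subset (subset_univ _))
    fun B _ => measurableSet_preimage_filter_mem hs B]
  simp_rw [preimage_filter_mem_eq_pi, measureReal_pi_univ_pi_ite_mem μ hs]
  rw [Finset.sum_filter, ← Finset.powerset_univ]
  refine (Finset.sum_powerset_apply_card fun j =>
    if k ≤ j then μ.real s ^ j * (1 - μ.real s) ^ (Fintype.card ι - j) else 0).trans ?_
  rw [binomTail, Finset.card_univ]
  simp_rw [nsmul_eq_mul, mul_ite, mul_zero, ← mul_assoc]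
  rw [← Finset.sum_filter]
  congr 1
  ext j
  simp only [Finset.mem_filter, Finset.mem_range, Finset.mem_Icc]
  omega

end Binomial

theorem hasDerivAt_choose_mul_pow_mul_pow (n j : ℕ) (x : ℝ) :
    HasDerivAt (fun x => (n.choose j : ℝ) * x ^ j * (1 - x) ^ (n - j))
      ((n.choose j : ℝ) * j * x ^ (j - 1) * (1 - x) ^ (n - j) -
        (n.choose (j + 1) : ℝ) * (j + 1 : ℕ) * x ^ (j + 1 - 1) * (1 - x) ^ (n - (j + 1))) x := by
  have hchoose : (n.choose (j + 1) : ℝ) * (j + 1 : ℕ) = n.choose j * (n - j : ℕ) := by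
    exact_mod_cast Nat.choose_succ_right_eq n j
  refine (((hasDerivAt_pow j x).const_mul _).mul
    (((hasDerivAt_id' x).const_sub 1).fun_pow (n - j))).congr_deriv ?_
  rw [hchoose, Nat.add_sub_cancel, Nat.sub_sub]
  ring

theorem hasDerivAt_binomTail {n k : ℕ} (hkn : k ≤ n) (x : ℝ) :
    HasDerivAt (binomTail n k) ((n.choose k : ℝ) * k * x ^ (k - 1) * (1 - x) ^ (n - k)) x := by
  set g : ℕ → ℝ := fun j => (n.choose j : ℝ) * j * x ^ (j - 1) * (1 - x) ^ (n - j)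
  have hsum := HasDerivAt.fun_sum (u := Finset.Icc k n)
    fun j _ => hasDerivAt_choose_mul_pow_mul_pow n j x
  have htelescope : ∑ j ∈ Finset.Icc k n, (g j - g (j + 1)) = g k := by
    have := Finset.sum_Icc_sub hkn fun j => -g j
    simp only [neg_sub_neg] at this
    rw [this, show g (n + 1) = 0 by simp [g, Nat.choose_succ_self], sub_zero]
  exact hsum.congr_deriv htelescope

theorem binomTail_zero {n k : ℕ} (hk1 : 1 ≤ k) : binomTail n k 0 = 0 :=
  Finset.sum_eq_zero fun j hj => by
    rw [zero_pow (by grind), mul_zero, zero_mul]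

theorem gamma_add_div_gamma_mul_gamma_natCast {n k : ℕ} (hk1 : 1 ≤ k) (hkn : k ≤ n) :
    Real.Gamma (k + (n + 1 - k)) / (Real.Gamma k * Real.Gamma (n + 1 - k)) =
      n.choose k * k := by
  obtain ⟨m, rfl⟩ := Nat.exists_eq_add_of_le' hk1
  obtain ⟨l, rfl⟩ := Nat.exists_eq_add_of_le hkn
  have h := Nat.add_choose_mul_factorial_mul_factorial l (m + 1)
  rw [add_comm l] at h
  push_cast
  rw [show (m : ℝ) + 1 + (m + 1 + l + 1 - (m + 1)) = (m + 1 + l : ℕ) + 1 by push_cast; ring,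
    show (m : ℝ) + 1 + l + 1 - (m + 1) = l + 1 by ring, Real.Gamma_nat_eq_factorial,
    Real.Gamma_nat_eq_factorial, Real.Gamma_nat_eq_factorial, ← h]
  push_cast [Nat.factorial_succ]
  field_simp

theorem betaMeasure_natCast_Iic {n k : ℕ} (hk1 : 1 ≤ k) (hkn : k ≤ n) (t : ℝ) :
    betaMeasure k (n + 1 - k) (Iic t) = ENNReal.ofReal (binomTail n k (max 0 (min t 1))) := by
  set c := max 0 (min t 1)
  have hc1 : c ≤ 1 := max_le zero_le_one (min_le_right t 1)
  have hdensity : ∀ x : ℝ, Real.Gamma (k + (n + 1 - k)) / (Real.Gamma k * Real.Gamma (n + 1 - k)) *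
      x ^ ((k : ℝ) - 1) * (1 - x) ^ ((n + 1 - k : ℝ) - 1) =
        n.choose k * k * x ^ (k - 1) * (1 - x) ^ (n - k) := fun x => by
    rw [gamma_add_div_gamma_mul_gamma_natCast hk1 hkn, ← Nat.cast_pred hk1, Real.rpow_natCast,
      show (n + 1 - k : ℝ) - 1 = (n - k : ℕ) by push_cast [hkn]; ring, Real.rpow_natCast]
  have hset : Iic t ∩ Ioo 0 1 = Ioc 0 c \ {1} := by
    ext x
    simp only [mem_inter_iff, mem_Iic, mem_Ioo, mem_sdiff, mem_Ioc, mem_singleton_iff, c,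
      le_max_iff, le_min_iff]
    grind
  rw [betaMeasure, withDensity_apply _ measurableSet_Iic,
    Measure.restrict_restrict measurableSet_Iic, hset,
    setLIntegral_congr (sdiff_null_ae_eq_self (Real.volume_singleton))]
  simp_rw [hdensity]
  rw [← ofReal_integral_eq_lintegral_ofReal, ← intervalIntegral.integral_of_le (le_max_left _ _),
    intervalIntegral.integral_eq_sub_of_hasDerivAt (fun x _ => hasDerivAt_binomTail hkn x)
      (Continuous.intervalIntegrable (by fun_prop) _ _), binomTail_zero hk1, sub_zero]
  · exact Continuous.integrableOn_Ioc (by fun_prop)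
  · refine (ae_restrict_iff' measurableSet_Ioc).2 (Filter.Eventually.of_forall fun x hx => ?_)
    have : 0 ≤ 1 - x := by linarith [hx.2]
    exact mul_nonneg (mul_nonneg (by positivity) (pow_nonneg hx.1.le _)) (pow_nonneg this _)

theorem preimage_coverage_Iic {n k : ℕ} (hk1 : 1 ≤ k) (hkn : k ≤ n) (ν : Measure ℝ)
    [IsProbabilityMeasure ν] (t : ℝ) :
    (fun v : Fin n → ℝ => (ν {x : ℝ | (x : EReal) ≤ conformalQuantile v k}).toReal) ⁻¹' Iic t =
      {v | k ≤ Nat.card {i // v i ∈ {x | ProbabilityTheory.cdf ν x ≤ t}}} := by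
  set Φ : EReal → ℝ := fun e => (ν {x : ℝ | (x : EReal) ≤ e}).toReal
  have hΦ : Monotone Φ := fun a b hab =>
    ENNReal.toReal_mono (measure_ne_top _ _) (measure_mono fun x hx => le_trans hx hab)
  have hΦ_coe (y : ℝ) : Φ y = ProbabilityTheory.cdf ν y := by
    simp only [Φ, EReal.coe_le_coe_iff, ProbabilityTheory.cdf_eq_real, measureReal_def]
    rfl
  ext v
  rw [mem_preimage, mem_Iic, conformalQuantile_eq_orderStatistic]
  have h := orderStatistic_mem_iff (w := fun i => (v i : EReal)) (A := {e | Φ e ≤ t}) hk1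
    (by simpa using hkn) fun a b hab hb => (hΦ hab).trans hb
  simp only [mem_ofPred_eq, hΦ_coe] at h
  exact h

theorem stmt_6_general (n : ℕ) (ν : Measure ℝ) [IsProbabilityMeasure ν]
    (hcont : ∀ x : ℝ, ν {x} = 0)
    (k : ℕ) (hk1 : 1 ≤ k) (hkn : k ≤ n) :
    Measure.map
        (fun v : Fin n → ℝ =>
          (ν {x : ℝ | (x : EReal) ≤ conformalQuantile v k}).toReal)
        (Measure.pi fun _ : Fin n => ν) =
      betaMeasure k (n + 1 - k) := by
  have : NullSingletonClass ν := ⟨hcont⟩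
  have hL (t : ℝ) : MeasurableSet {x | ProbabilityTheory.cdf ν x ≤ t} :=
    (ProbabilityTheory.monotone_cdf ν).measurable measurableSet_Iic
  have hG : Measurable fun v : Fin n → ℝ =>
      (ν {x : ℝ | (x : EReal) ≤ conformalQuantile v k}).toReal := measurable_of_Iic fun t => by
    rw [preimage_coverage_Iic hk1 hkn]
    exact measurableSet_setOf_le_natCard (hL t) k
  have := Measure.isProbabilityMeasure_map (μ := Measure.pi fun _ : Fin n => ν) hG.aemeasurable
  refine Measure.ext_of_Iic _ _ fun t => ?_
  rw [Measure.map_apply hG measurableSet_Iic, preimage_coverage_Iic hk1 hkn,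
    betaMeasure_natCast_Iic hk1 hkn, ← ofReal_measureReal,
    measureReal_pi_setOf_le_natCard ν (hL t), ProbabilityTheory.measureReal_setOf_cdf_le,
    Fintype.card_fin]

theorem stmt_6 (n : ℕ) (ν : Measure ℝ) [IsProbabilityMeasure ν]
    (hcont : ∀ x : ℝ, ν {x} = 0) (α : ℝ) (hα : α ∈ Set.Ioo (0 : ℝ) 1)
    (k : ℕ) (hk : k = ⌈(1 - α) * (n + 1)⌉₊) (hk1 : 1 ≤ k) (hkn : k ≤ n) :
    Measure.map
        (fun v : Fin n → ℝ =>
          (ν {x : ℝ | (x : EReal) ≤ conformalQuantile v k}).toReal)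
        (Measure.pi fun _ : Fin n => ν) =
      betaMeasure k (n + 1 - k) :=
  stmt_6_general n ν hcont k hk1 hkn
end

section
/- Suppose a generative model has pass rate 1 - α* within a budget of M samples, i.e., P(K ≤ M) = 1 - α* where K is the number of samples until the first admissible output. Then any procedure that outputs a subset of the first M samples (never abstaining) has coverage at most 1 - α*; consequently, to guarantee coverage 1 - α with α < α*, the procedure must output the full space 𝒴 (abstain) with probability at least (α* - α). -/
open MeasureTheory

/-! Without abstention the output covers only on the event `K ≤ M`, so `Cover \ {K ≤ M} ⊆ Abstain`:
any coverage beyond `P(K ≤ M) = 1 - α*` has to be paid for with probability of abstaining. -/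

lemma MeasureTheory.measure_sub_le_of_diff_subset {Ω : Type*} [MeasurableSpace Ω]
    (μ : Measure Ω) {s t u : Set Ω} (h : s \ t ⊆ u) : μ s - μ t ≤ μ u :=
  le_measure_sdiff.trans (measure_mono h)

theorem stmt_15_general {Ω : Type*} [MeasurableSpace Ω] (μ : Measure Ω)
    (M : ℕ) (K : Ω → ℕ∞) (αstar α : ℝ)
    (hαstar : αstar ∈ Set.Ioo (0 : ℝ) 1)
    (hpass : μ {ω | K ω ≤ (M : ℕ∞)} = ENNReal.ofReal (1 - αstar))
    (Abstain Cover : Set Ω)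
    (hsub : Cover ∩ Abstainᶜ ⊆ {ω | K ω ≤ (M : ℕ∞)}) :
    (Abstain = ∅ → μ Cover ≤ ENNReal.ofReal (1 - αstar)) ∧
    (ENNReal.ofReal (1 - α) ≤ μ Cover → α < αstar →
      ENNReal.ofReal (αstar - α) ≤ μ Abstain) := by
  have hgap : Cover \ {ω | K ω ≤ (M : ℕ∞)} ⊆ Abstain := fun ω ⟨hC, hK⟩ =>
    by_contra fun hA => hK (hsub ⟨hC, hA⟩)
  refine ⟨fun hA => ?_, fun hcov _ => ?_⟩
  · have hpassed : Cover ⊆ {ω | K ω ≤ (M : ℕ∞)} := by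
      simpa only [hA, Set.compl_empty, Set.inter_univ] using hsub
    exact hpass ▸ measure_mono hpassed
  · calc ENNReal.ofReal (αstar - α)
        = ENNReal.ofReal (1 - α) - ENNReal.ofReal (1 - αstar) := by
          rw [← ENNReal.ofReal_sub _ (by linarith [hαstar.2])]
          ring_nf
      _ ≤ μ Cover - μ {ω | K ω ≤ (M : ℕ∞)} := hpass ▸ tsub_le_tsub_right hcov _
      _ ≤ μ Abstain := measure_sub_le_of_diff_subset μ hgap

theorem stmt_15 {Ω : Type*} [MeasurableSpace Ω] (μ : Measure Ω) [IsProbabilityMeasure μ]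
    (M : ℕ) (K : Ω → ℕ∞) (αstar α : ℝ)
    (hαstar : αstar ∈ Set.Ioo (0 : ℝ) 1) (hα : α ∈ Set.Ioo (0 : ℝ) 1)
    (hpass : μ {ω | K ω ≤ (M : ℕ∞)} = ENNReal.ofReal (1 - αstar))
    (Abstain Cover : Set Ω)
    (hAbsCov : Abstain ⊆ Cover)
    (hsub : Cover ∩ Abstainᶜ ⊆ {ω | K ω ≤ (M : ℕ∞)}) :
    (Abstain = ∅ → μ Cover ≤ ENNReal.ofReal (1 - αstar)) ∧
    (ENNReal.ofReal (1 - α) ≤ μ Cover → α < αstar →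
      ENNReal.ofReal (αstar - α) ≤ μ Abstain) :=
  stmt_15_general μ M K αstar α hαstar hpass Abstain Cover hsub
end
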